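/- Let G = (V,E) be a connected finite simple graph containing no cycle of length 4, no cycle of length 5, and no cycle of length 6 (as subgraphs, not necessarily induced), with L(G) = ∅. Then every weight function w : V → ℝ for which G is w-well-covered is constant, i.e., there exists k ∈ ℝ such that w(v) = k for all v ∈ V. -/

import Mathlib

/-!
Every edge `xy` is relating, i.e. `S ∪ {x}` and `S ∪ {y}` are maximal independent sets for some
`S`; then `w`-well-coveredness forces `w x = w y`, and connectivity makes `w` constant.
To build `S`, give each neighbour `v` of `x` outside `N[y]` (and symmetrically for `y`) a
neighbour `z` outside `N[x] ∪ N[y]`: if there were none, `v` would lie in `L(G)`, or `C₄` would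
appear. Two chosen vertices are nonadjacent, since an edge between them closes a `C₅` (both
from the side of `x`) or a `C₆` (from opposite sides). Extending the chosen set to a maximal
independent subset of `V ∖ (N[x] ∪ N[y])` gives `S`.
-/

namespace WC

variable {V : Type*}

/-- A set of vertices is independent if its elements are pairwise nonadjacent. -/
def IsIndep (G : SimpleGraph V) (S : Set V) : Prop :=
  S.Pairwise fun a b => ¬ G.Adj a b

/-- A maximal independent set: independent and not properly contained in another
independent set. -/
def IsMaxIndep (G : SimpleGraph V) (S : Set V) : Prop :=
  IsIndep G S ∧ ∀ T : Set V, IsIndep G T → S ⊆ T → T = S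

/-- A maximal independent set of the subgraph of `G` induced by `A`
(equivalently, a subset of `A`, independent in `G`, maximal among such). -/
def IsMaxIndepOn (G : SimpleGraph V) (A S : Set V) : Prop :=
  S ⊆ A ∧ IsIndep G S ∧ ∀ T : Set V, T ⊆ A → IsIndep G T → S ⊆ T → T = S

/-- The weight of a set of vertices: `w(S) = Σ_{s ∈ S} w(s)`. -/
noncomputable def wsum (w : V → ℝ) (S : Set V) : ℝ := ∑ᶠ x ∈ S, w x

/-- `G` is `w`-well-covered if all maximal independent sets have the same weight. -/
def WWC (G : SimpleGraph V) (w : V → ℝ) : Prop :=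
  ∀ S T : Set V, IsMaxIndep G S → IsMaxIndep G T → wsum w S = wsum w T

/-- `G` is well-covered if all maximal independent sets have the same cardinality. -/
def WellCovered (G : SimpleGraph V) : Prop :=
  ∀ S T : Set V, IsMaxIndep G S → IsMaxIndep G T → S.ncard = T.ncard

/-- `N(S)`, the set of vertices at distance exactly 1 from `S`. -/
def nbhd (G : SimpleGraph V) (S : Set V) : Set V :=
  {x | x ∉ S ∧ ∃ s ∈ S, G.Adj x s}

/-- `N[S]`, the set of vertices at distance at most 1 from `S`. -/
def cnbhd (G : SimpleGraph V) (S : Set V) : Set V :=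
  S ∪ {x | ∃ s ∈ S, G.Adj x s}

/-- `N₂(S)`, the set of vertices at distance exactly 2 from `S`. -/
def n2 (G : SimpleGraph V) (S : Set V) : Set V :=
  {x | x ∉ cnbhd G S ∧ ∃ y ∈ nbhd G S, G.Adj x y}

/-- `S` dominates `T` if `T ⊆ N[S]`. -/
def Dominates (G : SimpleGraph V) (S T : Set V) : Prop := T ⊆ cnbhd G S

/-- `D(v) = N(v) \ N(N₂(v))`. -/
def dSet (G : SimpleGraph V) (v : V) : Set V :=
  G.neighborSet v \ nbhd G (n2 G {v})

/-- `L(G)`: vertices of degree 1, or of degree 2 lying on a triangle. -/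
def lSet (G : SimpleGraph V) : Set V :=
  {v | (G.neighborSet v).ncard = 1 ∨
    ((G.neighborSet v).ncard = 2 ∧ ∃ a b, G.Adj v a ∧ G.Adj v b ∧ G.Adj a b)}

/-- `G` contains a cycle of length `k` as a (not necessarily induced) subgraph. -/
def HasCycleLen (G : SimpleGraph V) (k : ℕ) : Prop :=
  ∃ (u : V) (p : G.Walk u u), p.IsCycle ∧ p.length = k

/-- A vertex is simplicial if its closed neighborhood induces a complete subgraph. -/
def Simplicial (G : SimpleGraph V) (v : V) : Prop :=
  ∀ a ∈ G.neighborSet v, ∀ b ∈ G.neighborSet v, a ≠ b → G.Adj a b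

/-- `B` is an induced complete bipartite subgraph of `G` on (nonempty, disjoint)
parts `BX` and `BY`. -/
def IsCompleteBipartiteOn (G : SimpleGraph V) (BX BY : Set V) : Prop :=
  BX.Nonempty ∧ BY.Nonempty ∧ Disjoint BX BY ∧ IsIndep G BX ∧ IsIndep G BY ∧
    ∀ x ∈ BX, ∀ y ∈ BY, G.Adj x y

/-- `B` (on parts `BX`, `BY`) is a generating subgraph of `G`: there is an
independent set `S` (a witness) such that `S ∪ BX` and `S ∪ BY` are both
maximal independent sets of `G`. -/
def IsGenerating (G : SimpleGraph V) (BX BY : Set V) : Prop :=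
  ∃ S : Set V, IsIndep G S ∧ IsMaxIndep G (S ∪ BX) ∧ IsMaxIndep G (S ∪ BY)

/-- The edge `xy` is relating: there is an independent set `S` such that
`S ∪ {x}` and `S ∪ {y}` are both maximal independent sets of `G`. -/
def IsRelating (G : SimpleGraph V) (x y : V) : Prop :=
  G.Adj x y ∧ ∃ S : Set V, IsIndep G S ∧ IsMaxIndep G (S ∪ {x}) ∧ IsMaxIndep G (S ∪ {y})

end WC

namespace WC

variable {V : Type*} {G : SimpleGraph V}

lemma hasCycleLen_four {a b c d : V} (hab : G.Adj a b) (hbc : G.Adj b c) (hcd : G.Adj c d)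
    (hda : G.Adj d a) (hac : a ≠ c) (hbd : b ≠ d) : HasCycleLen G 4 := by
  refine ⟨a, .cons hab (.cons hbc (.cons hcd (.cons hda .nil))), ?_, rfl⟩
  aesop (add norm simp SimpleGraph.Walk.isCycle_def)

lemma hasCycleLen_five {a b c d e : V} (hab : G.Adj a b) (hbc : G.Adj b c) (hcd : G.Adj c d)
    (hde : G.Adj d e) (hea : G.Adj e a)
    (hac : a ≠ c) (had : a ≠ d) (hbd : b ≠ d) (hbe : b ≠ e) (hce : c ≠ e) :
    HasCycleLen G 5 := by
  refine ⟨a, .cons hab (.cons hbc (.cons hcd (.cons hde (.cons hea .nil)))), ?_, rfl⟩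
  aesop (add norm simp SimpleGraph.Walk.isCycle_def)

lemma hasCycleLen_six {a b c d e f : V} (hab : G.Adj a b) (hbc : G.Adj b c) (hcd : G.Adj c d)
    (hde : G.Adj d e) (hef : G.Adj e f) (hfa : G.Adj f a)
    (hac : a ≠ c) (had : a ≠ d) (hae : a ≠ e) (hbd : b ≠ d) (hbe : b ≠ e) (hbf : b ≠ f)
    (hce : c ≠ e) (hcf : c ≠ f) (hdf : d ≠ f) :
    HasCycleLen G 6 := by
  refine ⟨a, .cons hab (.cons hbc (.cons hcd (.cons hde (.cons hef (.cons hfa .nil))))), ?_,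
    rfl⟩
  aesop (add norm simp SimpleGraph.Walk.isCycle_def)

lemma IsIndep.insert {S : Set V} {x : V} (hS : IsIndep G S) (hx : ∀ s ∈ S, ¬ G.Adj x s) :
    IsIndep G (insert x S) :=
  Set.pairwise_insert.2 ⟨hS, fun s hs _ => ⟨hx s hs, fun h => hx s hs h.symm⟩⟩

lemma exists_isMaxIndepOn_superset [Finite V] {A S₀ : Set V} (hA : S₀ ⊆ A)
    (hS₀ : IsIndep G S₀) : ∃ S, S₀ ⊆ S ∧ IsMaxIndepOn G A S := by
  obtain ⟨S, hS₀S, hS⟩ := (Set.toFinite {S | S ⊆ A ∧ IsIndep G S}).exists_le_maximal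
    (show S₀ ∈ {S | S ⊆ A ∧ IsIndep G S} from ⟨hA, hS₀⟩)
  exact ⟨S, hS₀S, hS.prop.1, hS.prop.2,
    fun T hTA hT hST => (hS.eq_of_le ⟨hTA, hT⟩ hST).symm⟩

lemma IsMaxIndepOn.exists_adj {A S : Set V} (hS : IsMaxIndepOn G A S) {u : V} (huA : u ∈ A)
    (huS : u ∉ S) : ∃ s ∈ S, G.Adj u s := by
  by_contra! h
  exact huS <| hS.2.2 _ (Set.insert_subset huA hS.1) (hS.2.1.insert h) (Set.subset_insert u S)
    ▸ Set.mem_insert u S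

lemma isMaxIndep_of_forall_exists_adj {S : Set V} (hS : IsIndep G S)
    (hdom : ∀ u ∉ S, ∃ s ∈ S, G.Adj u s) : IsMaxIndep G S := by
  refine ⟨hS, fun T hT hST => ?_⟩
  by_contra hne
  obtain ⟨u, huT, huS⟩ := Set.exists_of_ssubset (hST.ssubset_of_ne (Ne.symm hne))
  obtain ⟨s, hs, hus⟩ := hdom u huS
  exact hT huT (hST hs) (fun h => huS (h ▸ hs)) hus

lemma wsum_union_singleton [Finite V] (w : V → ℝ) {S : Set V} {x : V} (hx : x ∉ S) :
    wsum w (S ∪ {x}) = wsum w S + w x := by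
  rw [wsum, wsum, finsum_mem_union (by simpa using hx) S.toFinite (Set.toFinite {x}),
    finsum_mem_singleton]

lemma WWC.eq_of_isRelating [Finite V] {w : V → ℝ} (hw : WWC G w) {x y : V}
    (h : IsRelating G x y) : w x = w y := by
  obtain ⟨hxy, S, -, hSx, hSy⟩ := h
  have hxS : x ∉ S := fun hx => hSy.1 (Or.inl hx) (Or.inr rfl) hxy.ne hxy
  have hyS : y ∉ S := fun hy => hSx.1 (Or.inl hy) (Or.inr rfl) hxy.ne.symm hxy.symm
  have := hw _ _ hSx hSy
  rw [wsum_union_singleton w hxS, wsum_union_singleton w hyS] at this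
  linarith

lemma mem_lSet_of_forall_adj (h4 : ¬ HasCycleLen G 4) {x v : V} (hxv : G.Adj x v)
    (hN : ∀ z, G.Adj v z → z = x ∨ G.Adj x z) : v ∈ lSet G := by
  by_cases hu : ∃ u, G.Adj v u ∧ u ≠ x
  · obtain ⟨u, hvu, hux⟩ := hu
    have hxu : G.Adj x u := (hN u hvu).resolve_left hux
    have : G.neighborSet v = {x, u} := by
      ext z
      refine ⟨fun hvz => ?_, by rintro (rfl | rfl) <;> [exact hxv.symm; exact hvu]⟩
      by_contra hz
      simp only [Set.mem_insert_iff, Set.mem_singleton_iff, not_or] at hz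
      exact h4 (hasCycleLen_four hvz ((hN z hvz).resolve_left hz.1).symm hxu hvu.symm
        hxv.ne' hz.2)
    exact Or.inr ⟨by rw [this, Set.ncard_pair hux.symm], x, u, hxv.symm, hvu, hxu⟩
  · push Not at hu
    have : G.neighborSet v = {x} :=
      Set.eq_singleton_iff_unique_mem.2 ⟨hxv.symm, fun z hz => hu z hz⟩
    exact Or.inl (by rw [this, Set.ncard_singleton])

def farFrom (G : SimpleGraph V) (x y : V) : Set V :=
  {z | z ≠ x ∧ z ≠ y ∧ ¬ G.Adj x z ∧ ¬ G.Adj y z}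

def privNeighborSet (G : SimpleGraph V) (x y : V) : Set V :=
  {v | G.Adj x v ∧ v ≠ y ∧ ¬ G.Adj y v}

lemma farFrom_comm (x y : V) : farFrom G x y = farFrom G y x := by
  ext z
  simp only [farFrom, Set.mem_ofPred_eq]
  tauto

lemma exists_adj_mem_farFrom (h4 : ¬ HasCycleLen G 4) (hL : lSet G = ∅) {x y v : V}
    (hxy : G.Adj x y) (hv : v ∈ privNeighborSet G x y) : ∃ z ∈ farFrom G x y, G.Adj v z := by
  obtain ⟨hxv, hvy, hyv⟩ := hv
  by_contra! hfar
  refine (Set.eq_empty_iff_forall_notMem.1 hL) v (mem_lSet_of_forall_adj h4 hxv fun z hvz => ?_)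
  by_contra! hz
  have hyz : ¬ G.Adj y z := fun hyz =>
    h4 (hasCycleLen_four hxv hvz hyz.symm hxy.symm hz.1.symm hvy)
  exact hfar z ⟨hz.1, fun h => hyv (h ▸ hvz.symm), hz.2, hyz⟩ hvz

lemma not_adj_of_mem_farFrom_of_adj_same (h5 : ¬ HasCycleLen G 5) {x y v v' z z' : V}
    (hv : G.Adj x v) (hv' : G.Adj x v') (hvv' : v ≠ v') (hz : z ∈ farFrom G x y)
    (hz' : z' ∈ farFrom G x y) (hvz : G.Adj v z) (hvz' : G.Adj v' z') :
    ¬ G.Adj z z' := fun hzz' =>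
  h5 (hasCycleLen_five hv hvz hzz' hvz'.symm hv'.symm hz.1.symm hz'.1.symm
    (fun h => hz'.2.2.1 (h ▸ hv)) hvv' (fun h => hz.2.2.1 (h ▸ hv')))

lemma not_adj_of_mem_farFrom_of_adj_opposite (h6 : ¬ HasCycleLen G 6) {x y v v' z z' : V}
    (hxy : G.Adj x y) (hv : v ∈ privNeighborSet G x y) (hv' : v' ∈ privNeighborSet G y x)
    (hz : z ∈ farFrom G x y) (hz' : z' ∈ farFrom G x y) (hvz : G.Adj v z)
    (hvz' : G.Adj v' z') : ¬ G.Adj z z' := fun hzz' =>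
  h6 (hasCycleLen_six hxy.symm hv.1 hvz hzz' hvz'.symm hv'.1.symm hv.2.1.symm hz.2.1.symm
    hz'.2.1.symm hz.1.symm hz'.1.symm hv'.2.1.symm (fun h => hz'.2.2.1 (h ▸ hv.1))
    (fun h => hv'.2.2 (h ▸ hv.1)) (fun h => hz.2.2.2 (h ▸ hv'.1)))

lemma exists_isIndep_farFrom_dominating (h4 : ¬ HasCycleLen G 4) (h5 : ¬ HasCycleLen G 5)
    (h6 : ¬ HasCycleLen G 6) (hL : lSet G = ∅) {x y : V} (hxy : G.Adj x y) :
    ∃ S ⊆ farFrom G x y, IsIndep G S ∧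
      ∀ v ∈ privNeighborSet G x y ∪ privNeighborSet G y x, ∃ s ∈ S, G.Adj v s := by
  have hfar : ∀ v ∈ privNeighborSet G x y ∪ privNeighborSet G y x,
      ∃ z, z ∈ farFrom G x y ∧ G.Adj v z := by
    rintro v (hv | hv)
    · exact exists_adj_mem_farFrom h4 hL hxy hv
    · simpa only [farFrom_comm x y] using exists_adj_mem_farFrom h4 hL hxy.symm hv
  have : Nonempty V := ⟨x⟩
  choose! f hf using hfar
  refine ⟨f '' _, Set.image_subset_iff.2 fun v hv => (hf v hv).1, ?_,
    fun v hv => ⟨f v, Set.mem_image_of_mem f hv, (hf v hv).2⟩⟩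
  rintro _ ⟨v, hv, rfl⟩ _ ⟨v', hv', rfl⟩ hne
  have hvv' : v ≠ v' := fun h => hne (h ▸ rfl)
  obtain ⟨hz, hvz⟩ := hf v hv
  obtain ⟨hz', hvz'⟩ := hf v' hv'
  rcases hv with hv | hv <;> rcases hv' with hv' | hv'
  · exact not_adj_of_mem_farFrom_of_adj_same h5 hv.1 hv'.1 hvv' hz hz' hvz hvz'
  · exact not_adj_of_mem_farFrom_of_adj_opposite h6 hxy hv hv' hz hz' hvz hvz'
  · exact fun h => not_adj_of_mem_farFrom_of_adj_opposite h6 hxy hv' hv hz' hz hvz' hvz h.symm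
  · rw [farFrom_comm] at hz hz'
    exact not_adj_of_mem_farFrom_of_adj_same h5 hv.1 hv'.1 hvv' hz hz' hvz hvz'

lemma isMaxIndep_union_singleton {x y : V} (hxy : G.Adj x y) {S : Set V}
    (hS : IsMaxIndepOn G (farFrom G x y) S)
    (hdom : ∀ v ∈ privNeighborSet G y x, ∃ s ∈ S, G.Adj v s) :
    IsMaxIndep G (S ∪ {x}) := by
  rw [Set.union_singleton]
  refine isMaxIndep_of_forall_exists_adj (hS.2.1.insert fun s hs => (hS.1 hs).2.2.1) ?_
  intro u hu
  simp only [Set.mem_insert_iff, not_or] at hu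
  by_cases hxu : G.Adj x u
  · exact ⟨x, Set.mem_insert x S, hxu.symm⟩
  by_cases huy : u = y
  · exact ⟨x, Set.mem_insert x S, huy ▸ hxy.symm⟩
  obtain ⟨s, hs, hus⟩ : ∃ s ∈ S, G.Adj u s := by
    by_cases hyu : G.Adj y u
    · exact hdom u ⟨hyu, hu.1, hxu⟩
    · exact hS.exists_adj ⟨hu.1, huy, hxu, hyu⟩ hu.2
  exact ⟨s, Set.mem_insert_of_mem x hs, hus⟩

lemma isRelating_of_adj [Finite V] (h4 : ¬ HasCycleLen G 4) (h5 : ¬ HasCycleLen G 5)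
    (h6 : ¬ HasCycleLen G 6) (hL : lSet G = ∅) {x y : V} (hxy : G.Adj x y) :
    IsRelating G x y := by
  obtain ⟨S₀, hS₀far, hS₀, hdom⟩ := exists_isIndep_farFrom_dominating h4 h5 h6 hL hxy
  obtain ⟨S, hS₀S, hS⟩ := exists_isMaxIndepOn_superset hS₀far hS₀
  have hdom' : ∀ v ∈ privNeighborSet G x y ∪ privNeighborSet G y x, ∃ s ∈ S, G.Adj v s :=
    fun v hv => (hdom v hv).imp fun s hs => ⟨hS₀S hs.1, hs.2⟩
  refine ⟨hxy, S, hS.2.1, isMaxIndep_union_singleton hxy hS fun v hv => hdom' v (Or.inr hv),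
    isMaxIndep_union_singleton hxy.symm (farFrom_comm x y ▸ hS) fun v hv => hdom' v (Or.inl hv)⟩

lemma eq_of_reachable_of_forall_adj {α : Type*} {f : V → α}
    (hf : ∀ x y, G.Adj x y → f x = f y) {u v : V} (h : G.Reachable u v) : f u = f v := by
  obtain ⟨p⟩ := h
  induction p with
  | nil => rfl
  | cons hadj _ ih => exact (hf _ _ hadj).trans ih

end WC

open WC

/-- in a connected graph with no `C₄`, `C₅`, `C₆` and `L(G) = ∅`,
every weight function `w` for which `G` is `w`-well-covered is constant. -/
theorem stmt_15 {V : Type*} [Fintype V] (G : SimpleGraph V) (hconn : G.Connected)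
    (h4 : ¬ HasCycleLen G 4) (h5 : ¬ HasCycleLen G 5) (h6 : ¬ HasCycleLen G 6)
    (hL : lSet G = ∅) (w : V → ℝ) (hw : WWC G w) :
    ∃ k : ℝ, ∀ v : V, w v = k := by
  obtain ⟨v₀⟩ := hconn.nonempty
  refine ⟨w v₀, fun v => eq_of_reachable_of_forall_adj (fun x y hxy => ?_) (hconn v v₀)⟩
  exact hw.eq_of_isRelating (isRelating_of_adj h4 h5 h6 hL hxy)
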